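/- arXiv:2101.09861 — 6 statements merged into one kernel-verified Lean document; each statement's English description precedes it below -/
import Mathlib

section
/- For θ ∈ ℝ, the trace of the product I₁I₃I₂I₃ equals 7 + 8cos(2θ), and this trace is real. -/
open Complex Matrix

noncomputable def I₁ (θ : ℝ) : Matrix (Fin 3) (Fin 3) ℂ :=
  !![-1, 2 * Complex.exp (θ * Complex.I), 2;
     0, 1, 2 * Complex.exp (-(θ * Complex.I));
     0, 0, -1]

noncomputable def I₂ (θ : ℝ) : Matrix (Fin 3) (Fin 3) ℂ :=
  !![-1, -2 * Complex.exp (-(θ * Complex.I)), 2;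
     0, 1, -2 * Complex.exp (θ * Complex.I);
     0, 0, -1]

noncomputable def I₃ : Matrix (Fin 3) (Fin 3) ℂ :=
  !![0, 0, 1;
     0, -1, 0;
     1, 0, 0]

theorem trace_I₁I₃I₂I₃ (θ : ℝ) :
    Matrix.trace (I₁ θ * I₃ * I₂ θ * I₃) = ((7 + 8 * Real.cos (2 * θ) : ℝ) : ℂ) ∧
    (Matrix.trace (I₁ θ * I₃ * I₂ θ * I₃)).im = 0 := by
  have h : Matrix.trace (I₁ θ * I₃ * I₂ θ * I₃) = ((7 + 8 * Real.cos (2 * θ) : ℝ) : ℂ) := by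
    simp [I₁, I₂, I₃, Matrix.trace, Matrix.mul_apply, Fin.sum_univ_succ]
    rw [Complex.cos,
      show (2:ℂ) * θ * Complex.I = θ * Complex.I + θ * Complex.I by ring,
      show (-(2 * (θ:ℂ))) * Complex.I = -(θ * Complex.I) + -(θ * Complex.I) by ring,
      Complex.exp_add, Complex.exp_add]
    ring
  exact ⟨h, by rw [h]; exact Complex.ofReal_im _⟩
end

section
/- For θ = π/3, the matrix I₁I₃I₂I₃ has trace 3 and is unipotent: (I₁I₃I₂I₃ - Id)³ = 0, but I₁I₃I₂I₃ ≠ Id. -/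
open Complex Matrix

set_option maxHeartbeats 1000000 in
theorem parabolic_at_pi_div_three :
    Matrix.trace (I₁ (Real.pi / 3) * I₃ * I₂ (Real.pi / 3) * I₃) = 3 ∧
    (I₁ (Real.pi / 3) * I₃ * I₂ (Real.pi / 3) * I₃ - 1) ^ 3 = 0 ∧
    I₁ (Real.pi / 3) * I₃ * I₂ (Real.pi / 3) * I₃ ≠ 1 := by
  obtain ⟨c, hc⟩ : ∃ x : ℂ, x = Complex.exp ((Real.pi / 3 : ℝ) * Complex.I) := ⟨_, rfl⟩
  obtain ⟨d, hd⟩ : ∃ x : ℂ, x = Complex.exp (-((Real.pi / 3 : ℝ) * Complex.I)) := ⟨_, rfl⟩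
  have hmul : c * d = 1 := by
    rw [hc, hd, ← Complex.exp_add]
    simp
  have hsum : c + d = 1 := by
    rw [hc, hd, Complex.exp_mul_I, ← neg_mul, Complex.exp_mul_I, Complex.cos_neg,
      Complex.sin_neg]
    have h2 : Complex.cos ((Real.pi / 3 : ℝ) : ℂ) = 1 / 2 := by
      rw [← Complex.ofReal_cos, Real.cos_pi_div_three]; norm_num
    rw [h2]; ring
  have hc2 : c ^ 2 = c - 1 := by linear_combination (-1 : ℂ) * hmul + c * hsum
  have hc3 : c ^ 3 = -1 := by linear_combination (c + 1) * hc2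
  have hd2 : d = 1 - c := by linear_combination hsum
  have e1 : I₁ (Real.pi / 3) = !![-1, 2 * c, 2; 0, 1, 2 * (1 - c); 0, 0, -1] := by
    rw [I₁, ← hc, ← hd, hd2]
  have e2 : I₂ (Real.pi / 3) = !![-1, -2 * (1 - c), 2; 0, 1, -2 * c; 0, 0, -1] := by
    rw [I₂, ← hc, ← hd, hd2]
  have hM : I₁ (Real.pi / 3) * I₃ * I₂ (Real.pi / 3) * I₃ =
      !![1 + 4 * c, 4 - 2 * c, -2; 4 - 2 * c, 1 - 4 * c, -2 + 2 * c; -2, -2 + 2 * c, 1] := by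
    rw [e1, e2, I₃]
    simp only [Matrix.mul_fin_three]
    ext i j
    fin_cases i <;> fin_cases j <;> simp <;>
      (ring_nf; all_goals (simp only [hc2, hc3]; ring_nf))
  rw [hM]
  refine ⟨?_, ?_, ?_⟩
  · simp [Matrix.trace_fin_three]
    ring
  · have hsub : (!![1 + 4 * c, 4 - 2 * c, -2; 4 - 2 * c, 1 - 4 * c, -2 + 2 * c;
        -2, -2 + 2 * c, 1] - 1 : Matrix (Fin 3) (Fin 3) ℂ) =
        !![4 * c, 4 - 2 * c, -2; 4 - 2 * c, -4 * c, -2 + 2 * c; -2, -2 + 2 * c, 0] := by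
      ext i j
      fin_cases i <;> fin_cases j <;> simp [Matrix.one_apply] <;> ring
    rw [pow_succ, pow_succ, pow_one, hsub]
    simp only [Matrix.mul_fin_three]
    ext i j
    fin_cases i <;> fin_cases j <;> simp <;>
      (ring_nf; all_goals (simp only [hc2, hc3]; ring_nf))
  · intro h
    have h02 := congrFun (congrFun h 0) 2
    simp [Matrix.one_apply] at h02
end

section
/- For θ ∈ ℝ, with S = I₂I₃ and T = I₂I₁, the element T⁻¹S satisfies (T⁻¹S)⁴ = Id. -/
open Complex Matrix

theorem TinvS_order_four (θ : ℝ) :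
    ((I₂ θ * I₁ θ)⁻¹ * (I₂ θ * I₃)) ^ 4 = 1 := by
  set a : ℂ := Complex.exp (θ * Complex.I) with ha
  set b : ℂ := Complex.exp (-(θ * Complex.I)) with hb
  have hab : a * b = 1 := by
    rw [ha, hb, ← Complex.exp_add]
    simp
  have hTi : (I₂ θ * I₁ θ)⁻¹ =
      !![1, 2*a + 2*b, -4 - 4*a*b - 4*a^2 + 4*(a*b)*(a*b); 0, 1, -2*b - 2*a; 0, 0, 1] := by
    apply inv_eq_left_inv
    rw [I₁, I₂, Matrix.mul_fin_three, Matrix.mul_fin_three, Matrix.one_fin_three]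
    ext i j
    fin_cases i <;> fin_cases j <;> (try simp [Matrix.vecHead, Matrix.vecTail, ← ha, ← hb]) <;>
      first
        | ring1
        | linear_combination (4*a*b + 8) * hab
  have hM : (I₂ θ * I₁ θ)⁻¹ * (I₂ θ * I₃) =
      !![2, -2*a, -1; 2*b, -1, 0; -1, 0, 0] := by
    rw [hTi, I₂, I₃, Matrix.mul_fin_three, Matrix.mul_fin_three]
    ext i j
    fin_cases i <;> fin_cases j <;> (try simp [Matrix.vecHead, Matrix.vecTail, ← ha, ← hb]) <;>
      first
        | ring1
        | linear_combination (-4*a*b - 4) * hab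
  rw [hM]
  have h2 : (!![2, -2*a, -1; 2*b, -1, 0; -1, 0, 0] : Matrix (Fin 3) (Fin 3) ℂ) ^ 2 =
      !![5 - 4*a*b, -2*a, -2; 2*b, 1 - 4*a*b, -2*b; -2, 2*a, 1] := by
    rw [sq, Matrix.mul_fin_three]
    ext i j
    fin_cases i <;> fin_cases j <;> (try simp [Matrix.vecHead, Matrix.vecTail, ← ha, ← hb]) <;> ring
  have h4 : ((!![2, -2*a, -1; 2*b, -1, 0; -1, 0, 0] : Matrix (Fin 3) (Fin 3) ℂ) ^ 2) ^ 2 = 1 := by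
    rw [h2, sq, Matrix.mul_fin_three, Matrix.one_fin_three]
    ext i j
    fin_cases i <;> fin_cases j <;> (try simp [Matrix.vecHead, Matrix.vecTail, ← ha, ← hb]) <;>
      first
        | ring1
        | linear_combination (16*a*b - 28) * hab
        | linear_combination (16*a) * hab
        | linear_combination (12 : ℂ) * hab
        | linear_combination (-16*b) * hab
        | linear_combination (16*a*b) * hab
        | linear_combination (8*b) * hab
        | linear_combination (-8*a) * hab
        | linear_combination (-4 : ℂ) * hab
  calc (!![2, -2*a, -1; 2*b, -1, 0; -1, 0, 0] : Matrix (Fin 3) (Fin 3) ℂ) ^ 4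
      = ((!![2, -2*a, -1; 2*b, -1, 0; -1, 0, 0] : Matrix (Fin 3) (Fin 3) ℂ) ^ 2) ^ 2 := by
        rw [← pow_mul]
    _ = 1 := h4
end

section
/- Let θ = π/3 and let S = I₂I₃, T = I₂I₁ be the corresponding matrices. The point p₂ of the Heisenberg group with coordinates [(-1+i√3)/2, -√3], with standard lift p̂₂ = ((-|z|²+it)/2, z, 1) = ((-1 - i√3)/2, (-1+i√3)/2, 1), where z = (-1+i√3)/2 and t = -√3, is fixed by T⁻¹S²: (T⁻¹S²)·p̂₂ = p̂₂. -/
open Complex Matrix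

noncomputable def p₂hat : Fin 3 → ℂ :=
  ![(-1 - Complex.I * Real.sqrt 3) / 2, (-1 + Complex.I * Real.sqrt 3) / 2, 1]

lemma expP : Complex.exp ((Real.pi/3 : ℝ) * Complex.I) = (1 + Real.sqrt 3 * Complex.I) / 2 := by
  rw [Complex.exp_mul_I, ← Complex.ofReal_cos, ← Complex.ofReal_sin,
    Real.cos_pi_div_three, Real.sin_pi_div_three]
  push_cast; ring

lemma expN : Complex.exp (-((Real.pi/3 : ℝ) * Complex.I)) = (1 - Real.sqrt 3 * Complex.I) / 2 := by
  have : -(((Real.pi/3 : ℝ) : ℂ) * Complex.I) = ((-(Real.pi/3) : ℝ) : ℂ) * Complex.I := by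
    push_cast; ring
  rw [this, Complex.exp_mul_I, ← Complex.ofReal_cos, ← Complex.ofReal_sin,
    Real.cos_neg, Real.sin_neg, Real.cos_pi_div_three, Real.sin_pi_div_three]
  push_cast; ring

lemma hs3 : ((Real.sqrt 3 : ℝ) : ℂ)^2 = 3 := by
  norm_cast
  exact Real.sq_sqrt (by norm_num)

lemma hI2 : (Complex.I)^2 = -1 := Complex.I_sq

theorem p₂_fixed_by_TinvSsq :
    ((I₂ (Real.pi / 3) * I₁ (Real.pi / 3))⁻¹ *
        (I₂ (Real.pi / 3) * I₃) * (I₂ (Real.pi / 3) * I₃)).mulVec p₂hat = p₂hat := by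
  set θ := Real.pi / 3 with hθ
  have hp : Complex.exp ((θ:ℂ) * Complex.I) = (1 + Real.sqrt 3 * Complex.I) / 2 := expP
  have hn : Complex.exp (-((θ:ℂ) * Complex.I)) = (1 - Real.sqrt 3 * Complex.I) / 2 := expN
  have hdet : (I₂ θ * I₁ θ).det = 1 := by
    simp [I₁, I₂, Matrix.det_mul, Matrix.det_fin_three, hp, hn,
      Matrix.vecHead, Matrix.vecTail]
  have hS : ((I₂ θ * I₃) * (I₂ θ * I₃)).mulVec p₂hat = (I₂ θ * I₁ θ).mulVec p₂hat := by
    funext i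
    fin_cases i
    · simp [I₁, I₂, I₃, p₂hat, Matrix.mul_apply, Matrix.mulVec, dotProduct,
        Fin.sum_univ_three, hp, hn]
      field_simp
      linear_combination (- (Real.sqrt 3:ℂ)*Complex.I^3) * hs3
        + (-3*(Real.sqrt 3:ℂ)*Complex.I) * hI2
    · simp [I₁, I₂, I₃, p₂hat, Matrix.mul_apply, Matrix.mulVec, dotProduct,
        Fin.sum_univ_three, hp, hn]
      field_simp
      linear_combination ((Real.sqrt 3:ℂ)*Complex.I^3) * hs3
        + (3*(Real.sqrt 3:ℂ)*Complex.I) * hI2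
    · simp [I₁, I₂, I₃, p₂hat, Matrix.mul_apply, Matrix.mulVec, dotProduct,
        Fin.sum_univ_three, hp, hn]
      field_simp
      linear_combination (Complex.I^2) * hs3
        + (3:ℂ) * hI2
  rw [Matrix.mul_assoc, ← Matrix.mulVec_mulVec, hS, Matrix.mulVec_mulVec,
    Matrix.nonsing_inv_mul _ (by rw [hdet]; exact isUnit_one), Matrix.one_mulVec]
end

section
/- The group G with presentation ⟨u, v, w | w⁻¹vu⁻¹v⁻¹wu = 1, v²wuw⁻³u = 1⟩ is isomorphic to the group with presentation ⟨a, b, c | a²cb⁴c = 1, abca⁻¹b⁻¹c⁻¹ = 1⟩, via the map u ↦ c⁻¹b⁻¹, v ↦ b⁻¹, w ↦ a. -/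
open FreeGroup

/-- Relators for ⟨u,v,w | w⁻¹vu⁻¹v⁻¹wu, v²wuw⁻³u⟩, with 0 ↦ u, 1 ↦ v, 2 ↦ w. -/
def rels₁ : Set (FreeGroup (Fin 3)) :=
  { (of 2)⁻¹ * of 1 * (of 0)⁻¹ * (of 1)⁻¹ * of 2 * of 0,
    (of 1) ^ 2 * of 2 * of 0 * (of 2)⁻¹ ^ 3 * of 0 }

/-- Relators for ⟨a,b,c | a²cb⁴c, abca⁻¹b⁻¹c⁻¹⟩, with 0 ↦ a, 1 ↦ b, 2 ↦ c. -/
def rels₂ : Set (FreeGroup (Fin 3)) :=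
  { (of 0) ^ 2 * of 2 * (of 1) ^ 4 * of 2,
    of 0 * of 1 * of 2 * (of 0)⁻¹ * (of 1)⁻¹ * (of 2)⁻¹ }

lemma mk_rel_eq_one {α : Type*} {rels : Set (FreeGroup α)} {r : FreeGroup α} (h : r ∈ rels) :
    PresentedGroup.mk rels r = 1 :=
  (QuotientGroup.eq_one_iff r).mpr (Subgroup.subset_normalClosure h)

-- relations in PresentedGroup rels₂
lemma rel2_1 : (PresentedGroup.of (rels := rels₂) 0) ^ 2 * PresentedGroup.of 2 *
    (PresentedGroup.of 1) ^ 4 * PresentedGroup.of 2 = 1 := by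
  have := mk_rel_eq_one (rels := rels₂) (Set.mem_insert _ _)
  simpa [PresentedGroup.of] using this

lemma rel2_2 : PresentedGroup.of (rels := rels₂) 0 * PresentedGroup.of 1 * PresentedGroup.of 2 *
    (PresentedGroup.of (rels := rels₂) 0)⁻¹ * (PresentedGroup.of (rels := rels₂) 1)⁻¹ *
    (PresentedGroup.of (rels := rels₂) 2)⁻¹ = 1 := by
  have := mk_rel_eq_one (rels := rels₂) (Set.mem_insert_of_mem _ rfl)
  simpa [PresentedGroup.of] using this

-- relations in PresentedGroup rels₁
lemma rel1_1 : (PresentedGroup.of (rels := rels₁) 2)⁻¹ * PresentedGroup.of 1 *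
    (PresentedGroup.of (rels := rels₁) 0)⁻¹ * (PresentedGroup.of (rels := rels₁) 1)⁻¹ *
    PresentedGroup.of 2 * PresentedGroup.of 0 = 1 := by
  have := mk_rel_eq_one (rels := rels₁) (Set.mem_insert _ _)
  simpa [PresentedGroup.of] using this

lemma rel1_2 : (PresentedGroup.of (rels := rels₁) 1) ^ 2 * PresentedGroup.of 2 *
    PresentedGroup.of 0 * ((PresentedGroup.of (rels := rels₁) 2)⁻¹) ^ 3 *
    PresentedGroup.of 0 = 1 := by
  have := mk_rel_eq_one (rels := rels₁) (Set.mem_insert_of_mem _ rfl)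
  simpa [PresentedGroup.of] using this

/-- the forward map on generators: u ↦ c⁻¹b⁻¹, v ↦ b⁻¹, w ↦ a -/
def fwd : Fin 3 → PresentedGroup rels₂ :=
  ![(PresentedGroup.of 2)⁻¹ * (PresentedGroup.of 1)⁻¹, (PresentedGroup.of 1)⁻¹,
    PresentedGroup.of 0]

/-- the backward map on generators: a ↦ w, b ↦ v⁻¹, c ↦ vu⁻¹ -/
def bwd : Fin 3 → PresentedGroup rels₁ :=
  ![PresentedGroup.of 2, (PresentedGroup.of 1)⁻¹,
    PresentedGroup.of 1 * (PresentedGroup.of 0)⁻¹]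

lemma fwd_ok : ∀ r ∈ rels₁, FreeGroup.lift fwd r = 1 := by
  intro r hr
  set a := PresentedGroup.of (rels := rels₂) 0
  set b := PresentedGroup.of (rels := rels₂) 1
  set c := PresentedGroup.of (rels := rels₂) 2
  have h1 : a ^ 2 * c * b ^ 4 * c = 1 := rel2_1
  have h2 : a * b * c * a⁻¹ * b⁻¹ * c⁻¹ = 1 := rel2_2
  rcases hr with rfl | rfl
  · show FreeGroup.lift fwd _ = 1
    simp only [_root_.map_mul, _root_.map_inv, _root_.map_pow, FreeGroup.lift_apply_of, fwd,
      Matrix.cons_val_zero, Matrix.cons_val_one, Matrix.head_cons,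
      Matrix.cons_val_two, Matrix.tail_cons]
    calc a⁻¹ * b⁻¹ * ((c⁻¹ * b⁻¹))⁻¹ * (b⁻¹)⁻¹ * a * (c⁻¹ * b⁻¹)
        = a⁻¹ * (a * b * c * a⁻¹ * b⁻¹ * c⁻¹)⁻¹ * a := by group
      _ = 1 := by rw [h2]; group
  · show FreeGroup.lift fwd _ = 1
    simp only [_root_.map_mul, _root_.map_inv, _root_.map_pow, FreeGroup.lift_apply_of, fwd,
      Matrix.cons_val_zero, Matrix.cons_val_one, Matrix.head_cons,
      Matrix.cons_val_two, Matrix.tail_cons]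
    calc (b⁻¹) ^ 2 * a * (c⁻¹ * b⁻¹) * (a⁻¹) ^ 3 * (c⁻¹ * b⁻¹)
        = (b⁻¹ * b⁻¹ * b⁻¹ * c⁻¹) * (a * b * c * a⁻¹ * b⁻¹ * c⁻¹)⁻¹ * (c * b * b * b) *
          ((b * c) * (a ^ 2 * c * b ^ 4 * c)⁻¹ * (c⁻¹ * b⁻¹)) := by group
      _ = 1 := by rw [h1, h2]; group

lemma bwd_ok : ∀ r ∈ rels₂, FreeGroup.lift bwd r = 1 := by
  intro r hr
  set u := PresentedGroup.of (rels := rels₁) 0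
  set v := PresentedGroup.of (rels := rels₁) 1
  set w := PresentedGroup.of (rels := rels₁) 2
  have hA : w⁻¹ * v * u⁻¹ * v⁻¹ * w * u = 1 := rel1_1
  have hB : v ^ 2 * w * u * (w⁻¹) ^ 3 * u = 1 := rel1_2
  have hA' : v * u⁻¹ * v⁻¹ = w * u⁻¹ * w⁻¹ := by
    calc v * u⁻¹ * v⁻¹ = w * (w⁻¹ * v * u⁻¹ * v⁻¹ * w * u) * u⁻¹ * w⁻¹ := by group
      _ = w * u⁻¹ * w⁻¹ := by rw [hA]; group
  have hB' : v⁻¹ * v⁻¹ = w * u * w⁻¹ * w⁻¹ * w⁻¹ * u := by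
    have : w * u * w⁻¹ * w⁻¹ * w⁻¹ * u = v⁻¹ * v⁻¹ := by
      calc w * u * w⁻¹ * w⁻¹ * w⁻¹ * u
          = v⁻¹ * v⁻¹ * (v ^ 2 * w * u * (w⁻¹) ^ 3 * u) := by group
        _ = v⁻¹ * v⁻¹ := by rw [hB]; group
    exact this.symm
  rcases hr with rfl | rfl
  · show FreeGroup.lift bwd _ = 1
    simp only [_root_.map_mul, _root_.map_inv, _root_.map_pow, FreeGroup.lift_apply_of, bwd,
      Matrix.cons_val_zero, Matrix.cons_val_one, Matrix.head_cons,
      Matrix.cons_val_two, Matrix.tail_cons]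
    calc w ^ 2 * (v * u⁻¹) * (v⁻¹) ^ 4 * (v * u⁻¹)
        = w ^ 2 * (v * u⁻¹ * v⁻¹) * (v⁻¹ * v⁻¹) * u⁻¹ := by group
      _ = w ^ 2 * (w * u⁻¹ * w⁻¹) * (w * u * w⁻¹ * w⁻¹ * w⁻¹ * u) * u⁻¹ := by rw [hA', hB']
      _ = 1 := by group
  · show FreeGroup.lift bwd _ = 1
    simp only [_root_.map_mul, _root_.map_inv, _root_.map_pow, FreeGroup.lift_apply_of, bwd,
      Matrix.cons_val_zero, Matrix.cons_val_one, Matrix.head_cons,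
      Matrix.cons_val_two, Matrix.tail_cons]
    calc w * v⁻¹ * (v * u⁻¹) * w⁻¹ * (v⁻¹)⁻¹ * (v * u⁻¹)⁻¹
        = w * (w⁻¹ * v * u⁻¹ * v⁻¹ * w * u)⁻¹ * w⁻¹ := by group
      _ = 1 := by rw [hA]; group

/-- forward homomorphism -/
def φh : PresentedGroup rels₁ →* PresentedGroup rels₂ := PresentedGroup.toGroup fwd_ok

/-- backward homomorphism -/
def ψh : PresentedGroup rels₂ →* PresentedGroup rels₁ := PresentedGroup.toGroup bwd_ok

lemma φ_of (i : Fin 3) : φh (PresentedGroup.of i) = fwd i := PresentedGroup.toGroup.of fwd_ok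

lemma ψ_of (i : Fin 3) : ψh (PresentedGroup.of i) = bwd i := PresentedGroup.toGroup.of bwd_ok

lemma comp1 : ψh.comp φh = MonoidHom.id _ := by
  apply PresentedGroup.ext
  intro x
  fin_cases x <;>
    simp only [MonoidHom.comp_apply, MonoidHom.id_apply, φ_of, fwd, Matrix.cons_val_zero,
      Matrix.cons_val_one, Matrix.head_cons, Matrix.cons_val_two, Matrix.tail_cons,
      _root_.map_mul, _root_.map_inv, ψ_of, bwd] <;>
    simp [ψ_of, bwd]

lemma comp2 : φh.comp ψh = MonoidHom.id _ := by
  apply PresentedGroup.ext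
  intro x
  fin_cases x <;>
    simp only [MonoidHom.comp_apply, MonoidHom.id_apply, ψ_of, bwd, Matrix.cons_val_zero,
      Matrix.cons_val_one, Matrix.head_cons, Matrix.cons_val_two, Matrix.tail_cons,
      _root_.map_mul, _root_.map_inv, φ_of, fwd] <;>
    simp [φ_of, fwd]

theorem presented_groups_isomorphic :
    ∃ φ : PresentedGroup rels₁ ≃* PresentedGroup rels₂,
      φ (PresentedGroup.of 0) =
          (PresentedGroup.of (rels := rels₂) 2)⁻¹ * (PresentedGroup.of 1)⁻¹ ∧
      φ (PresentedGroup.of 1) = (PresentedGroup.of (rels := rels₂) 1)⁻¹ ∧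
      φ (PresentedGroup.of 2) = PresentedGroup.of (rels := rels₂) 0 := by
  refine ⟨{ toFun := φh, invFun := ψh,
            left_inv := fun x => by
              have := DFunLike.congr_fun comp1 x
              simpa using this,
            right_inv := fun x => by
              have := DFunLike.congr_fun comp2 x
              simpa using this,
            map_mul' := map_mul φh }, ?_, ?_, ?_⟩
  · simpa [fwd] using φ_of 0
  · simpa [fwd] using φ_of 1
  · simpa [fwd] using φ_of 2
end

section
/- For θ ∈ ℝ, the vertical line L = {(x + i√3/2, √3 x) : x ∈ ℝ} ⊆ ℂ × ℝ is invariant under the Heisenberg translation T = I₂I₁ at θ = π/3; explicitly, the induced action of T on the Heisenberg group sends (x + i√3/2, √3 x) to ((x+2) + i√3/2, √3(x+2)). -/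
open Complex Matrix

/-- The standard lift of the Heisenberg point [z,t]. -/
noncomputable def lift (z : ℂ) (t : ℝ) : Fin 3 → ℂ :=
  ![(-((‖z‖ : ℝ) : ℂ) ^ 2 + (t : ℂ) * Complex.I) / 2, z, 1]

/-!
`I₂ θ * I₁ θ` is the Heisenberg translation by `[4 cos θ, 8 sin 2θ]`, which at `θ = π/3` is
`[2, 4√3]`. By the group law `[ζ, v] · [z, t] = [ζ + z, v + t + 2 Im (ζ z̄)]`, it moves a point
with `Im z = √3/2` by `2` in `Re z` and by `4√3 - 2√3 = 2√3` in `t`, so it slides the line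
`t = √3 Re z` along itself.
-/

open ComplexConjugate

/-- Left translation by the Heisenberg point `[ζ, v]`: the unipotent matrix whose last column is
`lift ζ v`. -/
noncomputable def heisenbergTranslation (ζ : ℂ) (v : ℝ) : Matrix (Fin 3) (Fin 3) ℂ :=
  !![1, -conj ζ, (-((‖ζ‖ : ℝ) : ℂ) ^ 2 + (v : ℂ) * I) / 2;
     0, 1, ζ;
     0, 0, 1]

lemma heisenbergTranslation_mulVec_lift (ζ z : ℂ) (v t : ℝ) :
    heisenbergTranslation ζ v *ᵥ _root_.lift z t =
      _root_.lift (ζ + z) (v + t + 2 * (ζ * conj z).im) := by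
  have him : (((ζ * conj z).im : ℝ) : ℂ) = (ζ * conj z - conj ζ * z) / (2 * I) := by
    rw [im_eq_sub_conj, map_mul, conj_conj]
  ext i
  fin_cases i <;>
    simp [heisenbergTranslation, _root_.lift, mulVec, dotProduct, Fin.sum_univ_three,
      ← mul_conj', him, -mul_im]
  · field_simp
    ring
  · ring

lemma heisenbergTranslation_ofReal (r v : ℝ) :
    heisenbergTranslation r v =
      !![1, -(r : ℂ), (-(r : ℂ) ^ 2 + v * I) / 2; 0, 1, r; 0, 0, 1] := by
  rw [heisenbergTranslation, ← mul_conj', conj_ofReal, sq]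

lemma I₂_mul_I₁ (θ : ℝ) :
    I₂ θ * I₁ θ = heisenbergTranslation (4 * Real.cos θ : ℝ) (8 * Real.sin (2 * θ)) := by
  rw [heisenbergTranslation_ofReal, I₁, I₂, ← neg_mul, exp_mul_I, exp_mul_I, cos_neg, sin_neg]
  push_cast
  ext i j
  fin_cases i <;> fin_cases j <;> simp [Matrix.mul_apply, Fin.sum_univ_three, sin_two_mul]
  · ring
  · linear_combination 4 * cos_sq_add_sin_sq (θ : ℂ) - 4 * sin (θ : ℂ) ^ 2 * I_sq
  · ring

theorem T_translates_invariant_R_circle (x : ℝ) :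
    (I₂ (Real.pi / 3) * I₁ (Real.pi / 3)).mulVec
        (lift ((x : ℂ) + Complex.I * (Real.sqrt 3 / 2 : ℝ)) (Real.sqrt 3 * x)) =
      lift (((x + 2 : ℝ) : ℂ) + Complex.I * (Real.sqrt 3 / 2 : ℝ))
        (Real.sqrt 3 * (x + 2)) := by
  have hζ : ((4 * Real.cos (Real.pi / 3) : ℝ) : ℂ) = 2 := by
    rw [Real.cos_pi_div_three]
    norm_num
  have hv : 8 * Real.sin (2 * (Real.pi / 3)) = 4 * Real.sqrt 3 := by
    rw [show 2 * (Real.pi / 3) = Real.pi - Real.pi / 3 by ring, Real.sin_pi_sub,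
      Real.sin_pi_div_three]
    ring
  rw [I₂_mul_I₁, hζ, hv, heisenbergTranslation_mulVec_lift]
  congr 1
  · push_cast
    ring
  · simp only [mul_im, conj_im, add_im, ofReal_re, ofReal_im, I_re, I_im, re_ofNat, im_ofNat]
    ring
end
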